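/- Let T be a power partial isometry on a Hilbert space H, P and Q the projections onto ⋂ T^n H and ⋂ T*^n H. Then the restriction of T to the subspace (1−P)QH is unitarily equivalent to S ⊗ 1 on ℓ²(ℕ) ⊗ M, where S is the unilateral shift and M = (1−TT*)QH. -/

import Mathlib

/-!
On `⋂ T*ⁿH` the operator `T` is isometric, and `T` maps this subspace into itself by the
Halmos–Wallen identity `T (T*ⁿ⁺¹Tⁿ⁺¹) = (T*ⁿTⁿ) T`; the identity holds in any C*-algebra because
the difference `X` of its two sides satisfies `X*X = 0`. Symmetrically `T*` preserves `⋂ TⁿH`, so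
`W = (1 - P)QH = (⋂ TⁿH)ᗮ ⊓ ⋂ T*ⁿH` is invariant under `T`, and `T` acts on it as an isometry with
wandering subspace `M = ker T* ⊓ ⋂ T*ⁿH`. The translates `TⁿM` are total in `W`: if `x ∈ W` is
orthogonal to all of them, then `m = (1 - TT*) T*ⁿx ∈ M` is orthogonal to itself, so
`T*ⁿx = T T*ⁿ⁺¹x` for every `n`, whence `x = TⁿT*ⁿx ∈ ⋂ TⁿH` and `x = 0`. Hence `W` is the
Hilbert sum of the `TⁿM`, on which `T` acts as the shift.
-/

open ContinuousLinearMap Module.End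
open scoped InnerProductSpace

lemma mul_eq_mul_of_star_mul_mul_eq {A : Type*} [NormedRing A] [StarRing A] [CStarRing A]
    {a f g : A} (hf : IsStarProjection f) (hg : IsStarProjection g)
    (hfg : star a * f * a = g) (hg' : star a * a * g = g) : a * g = f * a := by
  rw [← sub_eq_zero, ← CStarRing.star_mul_self_eq_zero_iff]
  calc star (a * g - f * a) * (a * g - f * a)
      = g * (star a * a * g) - g * (star a * f * a) - (star a * f * a) * g
          + star a * (f * f) * a := by
        rw [star_sub, star_mul, star_mul, hf.isSelfAdjoint.star_eq, hg.isSelfAdjoint.star_eq]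
        noncomm_ring
    _ = 0 := by rw [hg', hfg, hf.isIdempotentElem.eq, hfg, hg.isIdempotentElem.eq]; abel

def IsPowerPartialIsometry {A : Type*} [Monoid A] [StarMul A] (a : A) : Prop :=
  ∀ n : ℕ, a ^ n * star a ^ n * a ^ n = a ^ n

namespace IsPowerPartialIsometry

variable {A : Type*}

section Monoid

variable [Monoid A] [StarMul A] {a : A}

protected lemma star (h : IsPowerPartialIsometry a) : IsPowerPartialIsometry (star a) :=
  fun n => by simpa only [star_mul, star_pow, star_star, mul_assoc] using congrArg star (h n)

lemma star_pow_mul_pow_mul_star_pow (h : IsPowerPartialIsometry a) (n : ℕ) :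
    star a ^ n * a ^ n * star a ^ n = star a ^ n := by
  simpa only [star_star] using h.star n

lemma isStarProjection_star_pow_mul_pow (h : IsPowerPartialIsometry a) (n : ℕ) :
    IsStarProjection (star a ^ n * a ^ n) where
  isIdempotentElem := by rw [IsIdempotentElem, mul_assoc, ← mul_assoc (a ^ n), h n]
  isSelfAdjoint := by simpa only [star_pow] using IsSelfAdjoint.star_mul_self (a ^ n)

lemma isIdempotentElem_mul_star (h : IsPowerPartialIsometry a) :
    IsIdempotentElem (a * star a) := by
  rw [IsIdempotentElem, ← mul_assoc, show a * star a * a = a by simpa using h 1]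

end Monoid

section CStarRing

variable [NormedRing A] [StarRing A] [CStarRing A] {a : A}

lemma mul_star_pow_succ_mul_pow_succ (h : IsPowerPartialIsometry a) (n : ℕ) :
    a * (star a ^ (n + 1) * a ^ (n + 1)) = star a ^ n * a ^ n * a := by
  refine mul_eq_mul_of_star_mul_mul_eq (h.isStarProjection_star_pow_mul_pow n)
    (h.isStarProjection_star_pow_mul_pow (n + 1)) ?_ ?_
  · rw [pow_succ' (star a), pow_succ a]
    simp only [mul_assoc]
  · rw [pow_succ' (star a), ← mul_assoc, ← mul_assoc,
      show star a * a * star a = star a by simpa using h.star_pow_mul_pow_mul_star_pow 1]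

lemma mul_star_pow_succ (h : IsPowerPartialIsometry a) (n : ℕ) :
    a * star a ^ (n + 1) = star a ^ n * (a ^ (n + 1) * star a ^ (n + 1)) := by
  conv_lhs => rw [← h.star_pow_mul_pow_mul_star_pow (n + 1), ← mul_assoc, ← mul_assoc,
    mul_assoc a, h.mul_star_pow_succ_mul_pow_succ n]
  simp only [pow_succ, mul_assoc]

end CStarRing

end IsPowerPartialIsometry

namespace ContinuousLinearMap

section Semiring

variable {R M : Type*} [Semiring R] [AddCommMonoid M] [Module R M] [TopologicalSpace M]

def iInfRangePow (f : M →L[R] M) : Submodule R M :=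
  ⨅ n : ℕ, LinearMap.range ((f ^ (n + 1) : M →L[R] M) : M →ₗ[R] M)

lemma iInfRangePow_mem_invtSubmodule_of_commute {f g : M →L[R] M} (h : Commute f g) :
    iInfRangePow g ∈ invtSubmodule (f : M →ₗ[R] M) := by
  intro x hx
  simp only [iInfRangePow, Submodule.mem_comap, Submodule.mem_iInf] at hx ⊢
  intro n
  obtain ⟨y, rfl⟩ := hx n
  exact ⟨f y, (DFunLike.congr_fun (h.pow_right (n + 1)).eq y).symm⟩

lemma range_eq_of_forall_mem {p : M →L[R] M} {K : Submodule R M} (hfix : ∀ x ∈ K, p x = x)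
    (hrange : ∀ x, p x ∈ K) : LinearMap.range (p : M →ₗ[R] M) = K :=
  le_antisymm (by rintro _ ⟨x, rfl⟩; exact hrange x) fun x hx => ⟨x, hfix x hx⟩

lemma isIdempotentElem_of_forall_mem {p : M →L[R] M} {K : Submodule R M}
    (hfix : ∀ x ∈ K, p x = x) (hrange : ∀ x, p x ∈ K) : IsIdempotentElem p :=
  ext fun x => hfix _ (hrange x)

end Semiring

lemma range_one_sub_mul_eq_ker_inf_range {R M : Type*} [Ring R] [AddCommGroup M] [Module R M]
    [TopologicalSpace M] [IsTopologicalAddGroup M] {p q : M →L[R] M} (hp : IsIdempotentElem p)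
    (hq : IsIdempotentElem q) (hpq : Commute p q) :
    LinearMap.range (((1 - p) * q : M →L[R] M) : M →ₗ[R] M) =
      LinearMap.ker (p : M →ₗ[R] M) ⊓ LinearMap.range (q : M →ₗ[R] M) := by
  have hpp (x : M) : p (p x) = p x := DFunLike.congr_fun hp.eq x
  have hqq (x : M) : q (q x) = q x := DFunLike.congr_fun hq.eq x
  have hpq' (x : M) : p (q x) = q (p x) := DFunLike.congr_fun hpq.eq x
  ext x
  constructor
  · rintro ⟨y, rfl⟩
    refine ⟨?_, q (y - p y), ?_⟩ <;> simp [hpp, hqq, hpq']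
  · rintro ⟨hpx, y, rfl⟩
    have hpx : p (q y) = 0 := hpx
    exact ⟨q y, by simp [hqq, hpx]⟩

end ContinuousLinearMap

section InnerProductSpace

variable {𝕜 E : Type*} [RCLike 𝕜] [NormedAddCommGroup E] [InnerProductSpace 𝕜 E]

lemma orthogonalFamily_pow_comp {G : Type*} [NormedAddCommGroup G] [InnerProductSpace 𝕜 G]
    (S : E →ₗᵢ[𝕜] E) (J : G →ₗᵢ[𝕜] E) (hJS : ∀ m x, ⟪J m, S x⟫_𝕜 = 0) :
    OrthogonalFamily 𝕜 (fun _ : ℕ => G) fun n => (S ^ n).comp J := by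
  have key (i d : ℕ) (v w : G) : ⟪(S ^ i) (J v), (S ^ (i + d + 1)) (J w)⟫_𝕜 = 0 := by
    rw [add_assoc, pow_add, LinearIsometry.coe_mul, Function.comp_apply,
      LinearIsometry.inner_map_map, pow_succ', LinearIsometry.coe_mul, Function.comp_apply]
    exact hJS v _
  intro i j hij v w
  rcases hij.lt_or_gt with h | h
  · obtain ⟨d, rfl⟩ := Nat.exists_eq_add_of_lt h
    exact key i d v w
  · obtain ⟨d, rfl⟩ := Nat.exists_eq_add_of_lt h
    exact inner_eq_zero_symm.1 (key j d w v)

variable [CompleteSpace E]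

lemma IsHilbertSum.inner_linearIsometryEquiv_apply {ι : Type*} {G : ι → Type*}
    [∀ i, NormedAddCommGroup (G i)] [∀ i, InnerProductSpace 𝕜 (G i)] {V : ∀ i, G i →ₗᵢ[𝕜] E}
    (hV : IsHilbertSum 𝕜 G V) (x : E) (i : ι) (g : G i) :
    ⟪g, hV.linearIsometryEquiv x i⟫_𝕜 = ⟪V i g, x⟫_𝕜 := by
  classical
  rw [← lp.inner_single_left, ← hV.linearIsometryEquiv_symm_apply_single,
    LinearIsometryEquiv.inner_map_eq_flip, LinearIsometryEquiv.symm_symm]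

theorem exists_linearIsometryEquiv_lp_shift {G : Type*} [NormedAddCommGroup G]
    [InnerProductSpace 𝕜 G] [CompleteSpace G] (S : E →ₗᵢ[𝕜] E) (J : G →ₗᵢ[𝕜] E)
    (hJS : ∀ m x, ⟪J m, S x⟫_𝕜 = 0) (htotal : ∀ x, (∀ n m, ⟪(S ^ n) (J m), x⟫_𝕜 = 0) → x = 0) :
    ∃ U : E ≃ₗᵢ[𝕜] lp (fun _ : ℕ => G) 2, ∀ x, U (S x) 0 = 0 ∧ ∀ n, U (S x) (n + 1) = U x n := by
  have hsum : IsHilbertSum 𝕜 (fun _ : ℕ => G) fun n => (S ^ n).comp J := by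
    refine IsHilbertSum.mk (orthogonalFamily_pow_comp S J hJS) ?_
    rw [top_le_iff, Submodule.topologicalClosure_eq_top_iff, Submodule.eq_bot_iff]
    exact fun x hx => htotal x fun n m =>
      (Submodule.mem_orthogonal _ x).1 hx _ (Submodule.mem_iSup_of_mem n ⟨m, rfl⟩)
  refine ⟨hsum.linearIsometryEquiv, fun x => ⟨?_, fun n => ?_⟩⟩ <;>
    refine ext_inner_left 𝕜 fun g => ?_
  · rw [hsum.inner_linearIsometryEquiv_apply, inner_zero_right]
    exact hJS g x
  · rw [hsum.inner_linearIsometryEquiv_apply, hsum.inner_linearIsometryEquiv_apply]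
    change ⟪(S ^ (n + 1)) (J g), S x⟫_𝕜 = ⟪(S ^ n) (J g), x⟫_𝕜
    rw [pow_succ', LinearIsometry.coe_mul, Function.comp_apply, LinearIsometry.inner_map_map]

theorem exists_linearIsometryEquiv_lp_of_wandering {T : E →L[𝕜] E} {W M : Submodule 𝕜 E}
    [CompleteSpace W] [CompleteSpace M] (hTW : ∀ x ∈ W, T x ∈ W) (hiso : ∀ x ∈ W, ‖T x‖ = ‖x‖)
    (hMW : M ≤ W) (hMT : ∀ m ∈ M, adjoint T m = 0)
    (htotal : ∀ x ∈ W, (∀ n, ∀ m ∈ M, ⟪(T ^ n) m, x⟫_𝕜 = 0) → x = 0) :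
    ∃ U : W ≃ₗᵢ[𝕜] lp (fun _ : ℕ => M) 2, ∀ x : W,
      U ⟨T x, hTW x x.2⟩ 0 = 0 ∧ ∀ n, U ⟨T x, hTW x x.2⟩ (n + 1) = U x n := by
  let S : W →ₗᵢ[𝕜] W := ⟨(T : E →ₗ[𝕜] E).restrict hTW, fun x => hiso x x.2⟩
  let J : M →ₗᵢ[𝕜] W := ⟨Submodule.inclusion hMW, fun _ => rfl⟩
  have hSpow (n : ℕ) (x : W) : ((S ^ n) x : E) = (T ^ n) x := by
    induction n with
    | zero => rfl
    | succ n ih =>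
      rw [pow_succ', LinearIsometry.coe_mul, Function.comp_apply, pow_succ', mul_apply_eq_comp]
      exact congrArg T ih
  refine exists_linearIsometryEquiv_lp_shift S J (fun m x => ?_) fun x hx => ?_
  · change ⟪(m : E), T x⟫_𝕜 = 0
    rw [← adjoint_inner_left, hMT m m.2, inner_zero_left]
  · refine Subtype.ext (htotal x x.2 fun n m hm => ?_)
    have h := hx n ⟨m, hm⟩
    rw [Submodule.coe_inner, hSpow] at h
    exact h

lemma IsStarProjection.commute_of_mem_invtSubmodule {p b : E →L[𝕜] E} (hp : IsStarProjection p)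
    (h : LinearMap.range (p : E →ₗ[𝕜] E) ∈ invtSubmodule (b : E →ₗ[𝕜] E))
    (h' : LinearMap.range (p : E →ₗ[𝕜] E) ∈ invtSubmodule (adjoint b : E →ₗ[𝕜] E)) :
    Commute p b :=
  hp.isIdempotentElem.commute_iff.2
    ⟨h, hp.isSelfAdjoint.isSymmetric.orthogonal_range ▸ orthogonal_mem_invtSubmodule h'⟩

namespace IsPowerPartialIsometry

variable {T : E →L[𝕜] E}

lemma iInfRangePow_adjoint_mem_invtSubmodule (hT : IsPowerPartialIsometry T) :
    iInfRangePow (adjoint T) ∈ invtSubmodule (T : E →ₗ[𝕜] E) := by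
  intro x hx
  simp only [iInfRangePow, Submodule.mem_comap, Submodule.mem_iInf] at hx ⊢
  intro n
  obtain ⟨y, rfl⟩ := hx (n + 1)
  exact ⟨_, (DFunLike.congr_fun (hT.mul_star_pow_succ (n + 1)) y).symm⟩

lemma iInfRangePow_mem_invtSubmodule_adjoint (hT : IsPowerPartialIsometry T) :
    iInfRangePow T ∈ invtSubmodule (adjoint T : E →ₗ[𝕜] E) := by
  simpa only [star_eq_adjoint, adjoint_adjoint] using
    hT.star.iInfRangePow_adjoint_mem_invtSubmodule

lemma commute_of_range_eq_iInfRangePow_adjoint (hT : IsPowerPartialIsometry T)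
    {Q : E →L[𝕜] E} (hQ : IsStarProjection Q)
    (hQr : LinearMap.range (Q : E →ₗ[𝕜] E) = iInfRangePow (adjoint T)) : Commute Q T :=
  hQ.commute_of_mem_invtSubmodule (hQr ▸ hT.iInfRangePow_adjoint_mem_invtSubmodule)
    (hQr ▸ iInfRangePow_mem_invtSubmodule_of_commute (Commute.refl _))

lemma adjoint_apply_apply_adjoint (hT : IsPowerPartialIsometry T) (y : E) :
    adjoint T (T (adjoint T y)) = adjoint T y := by
  have h := DFunLike.congr_fun (hT.star_pow_mul_pow_mul_star_pow 1) y
  rw [pow_one] at h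
  exact h

lemma norm_apply_of_mem_iInfRangePow_adjoint (hT : IsPowerPartialIsometry T) {x : E}
    (hx : x ∈ iInfRangePow (adjoint T)) : ‖T x‖ = ‖x‖ := by
  obtain ⟨y, rfl⟩ := (Submodule.mem_iInf _).1 hx 0
  rw [apply_norm_eq_sqrt_inner_adjoint_left, comp_apply, coe_coe, zero_add, pow_one,
    hT.adjoint_apply_apply_adjoint, ← norm_eq_sqrt_re_inner]

lemma mem_iInfRangePow_of_forall_inner_eq_zero (hT : IsPowerPartialIsometry T) {x : E}
    (hx : x ∈ iInfRangePow (adjoint T))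
    (horth : ∀ n, ∀ m ∈ iInfRangePow (adjoint T), adjoint T m = 0 → ⟪(T ^ n) m, x⟫_𝕜 = 0) :
    x ∈ iInfRangePow T := by
  set K := iInfRangePow (adjoint T)
  have hstep (n : ℕ) : T (adjoint T ((adjoint T ^ n) x)) = (adjoint T ^ n) x := by
    set y := (adjoint T ^ n) x
    have hy : y ∈ K :=
      iInfRangePow_mem_invtSubmodule_of_commute ((Commute.refl (adjoint T)).pow_left n) hx
    set m := y - T (adjoint T y)
    have hAm : adjoint T m = 0 := by rw [map_sub, hT.adjoint_apply_apply_adjoint, sub_self]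
    have hm : m ∈ K := K.sub_mem hy (hT.iInfRangePow_adjoint_mem_invtSubmodule
      (iInfRangePow_mem_invtSubmodule_of_commute (Commute.refl _) hy))
    have hmm : ⟪m, m⟫_𝕜 = 0 := calc
      ⟪m, m⟫_𝕜 = ⟪m, y⟫_𝕜 - ⟪m, T (adjoint T y)⟫_𝕜 := inner_sub_right _ _ _
      _ = ⟪(T ^ n) m, x⟫_𝕜 - ⟪adjoint T m, adjoint T y⟫_𝕜 := by
        have hAn : adjoint (T ^ n) = adjoint T ^ n := star_pow T n
        rw [← adjoint_inner_right (T ^ n), hAn, adjoint_inner_left]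
      _ = 0 := by rw [horth n m hm hAm, hAm, inner_zero_left, sub_zero]
    exact (sub_eq_zero.1 (inner_self_eq_zero.1 hmm)).symm
  have hpow (n : ℕ) : (T ^ n) ((adjoint T ^ n) x) = x := by
    induction n with
    | zero => rfl
    | succ n ih =>
      rw [pow_succ, mul_apply_eq_comp, pow_succ', mul_apply_eq_comp, hstep, ih]
  exact (Submodule.mem_iInf _).2 fun n => ⟨_, hpow (n + 1)⟩

theorem exists_linearIsometryEquiv_lp (hT : IsPowerPartialIsometry T) {W M : Submodule 𝕜 E}
    [CompleteSpace W] [CompleteSpace M] (hW : W = (iInfRangePow T)ᗮ ⊓ iInfRangePow (adjoint T))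
    (hM : M = LinearMap.ker (adjoint T : E →ₗ[𝕜] E) ⊓ iInfRangePow (adjoint T)) :
    ∃ hTW : ∀ x ∈ W, T x ∈ W, ∃ U : W ≃ₗᵢ[𝕜] lp (fun _ : ℕ => M) 2, ∀ x : W,
      U ⟨T x, hTW x x.2⟩ 0 = 0 ∧ ∀ n, U ⟨T x, hTW x x.2⟩ (n + 1) = U x n := by
  subst hW hM
  have hTW : ∀ x ∈ (iInfRangePow T)ᗮ ⊓ iInfRangePow (adjoint T),
      T x ∈ (iInfRangePow T)ᗮ ⊓ iInfRangePow (adjoint T) := fun x hx =>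
    invtSubmodule.inf_mem (orthogonal_mem_invtSubmodule hT.iInfRangePow_mem_invtSubmodule_adjoint)
      hT.iInfRangePow_adjoint_mem_invtSubmodule hx
  refine ⟨hTW, exists_linearIsometryEquiv_lp_of_wandering hTW
    (fun x hx => hT.norm_apply_of_mem_iInfRangePow_adjoint hx.2) (inf_le_inf_right _ ?_)
    (fun m hm => hm.1) fun x hx horth => ?_⟩
  · rw [← orthogonal_range]
    exact Submodule.orthogonal_le ((iInf_le _ 0).trans (by rw [zero_add, pow_one]))
  · have hxP := hT.mem_iInfRangePow_of_forall_inner_eq_zero hx.2 fun n m hm hAm =>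
      horth n m ⟨hAm, hm⟩
    have hx' : x ∈ iInfRangePow T ⊓ (iInfRangePow T)ᗮ := ⟨hxP, hx.1⟩
    rwa [Submodule.inf_orthogonal_eq_bot, Submodule.mem_bot] at hx'

end IsPowerPartialIsometry

end InnerProductSpace

/-- For a power partial isometry `T`, the restriction of `T` to `(1−P)QH` is
unitarily equivalent to `S ⊗ 1` on `ℓ²(ℕ) ⊗ M`, where `S` is the unilateral shift
and `M = (1−TT*)QH`.  Here `ℓ²(ℕ) ⊗ M` is realised as `ℓ²(ℕ, M)` and `S ⊗ 1` as the
shift `(S ⊗ 1)f(0) = 0`, `(S ⊗ 1)f(n+1) = f(n)`. -/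
theorem restriction_unitarily_equivalent_shift
    {H : Type*} [NormedAddCommGroup H] [InnerProductSpace ℂ H] [CompleteSpace H]
    (T : H →L[ℂ] H)
    (hT : ∀ n : ℕ, T ^ n * (adjoint T) ^ n * T ^ n = T ^ n)
    (P Q : H →L[ℂ] H)
    -- `P` is the orthogonal projection onto `⋂_{n ≥ 1} T^n H`:
    (hPsa : IsSelfAdjoint P)
    (hPfix : ∀ x ∈ ⨅ n : ℕ, LinearMap.range ((T ^ (n + 1) : H →L[ℂ] H) : H →ₗ[ℂ] H), P x = x)
    (hPrange : ∀ x : H, P x ∈ ⨅ n : ℕ, LinearMap.range ((T ^ (n + 1) : H →L[ℂ] H) : H →ₗ[ℂ] H))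
    -- `Q` is the orthogonal projection onto `⋂_{n ≥ 1} T*^n H`:
    (hQsa : IsSelfAdjoint Q)
    (hQfix : ∀ x ∈ ⨅ n : ℕ, LinearMap.range (((adjoint T) ^ (n + 1) : H →L[ℂ] H) : H →ₗ[ℂ] H), Q x = x)
    (hQrange : ∀ x : H, Q x ∈ ⨅ n : ℕ, LinearMap.range (((adjoint T) ^ (n + 1) : H →L[ℂ] H) : H →ₗ[ℂ] H)) :
    ∃ hinv : ∀ x ∈ LinearMap.range (((1 - P) * Q : H →L[ℂ] H) : H →ₗ[ℂ] H),
        T x ∈ LinearMap.range (((1 - P) * Q : H →L[ℂ] H) : H →ₗ[ℂ] H),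
      ∃ U : LinearMap.range (((1 - P) * Q : H →L[ℂ] H) : H →ₗ[ℂ] H) ≃ₗᵢ[ℂ]
          lp (fun _ : ℕ => LinearMap.range (((1 - T * adjoint T) * Q : H →L[ℂ] H) : H →ₗ[ℂ] H)) 2,
        ∀ x : LinearMap.range (((1 - P) * Q : H →L[ℂ] H) : H →ₗ[ℂ] H),
          (U ⟨T x, hinv x x.2⟩ : ∀ n : ℕ, LinearMap.range (((1 - T * adjoint T) * Q : H →L[ℂ] H) : H →ₗ[ℂ] H)) 0
              = 0 ∧
          ∀ n : ℕ,
            (U ⟨T x, hinv x x.2⟩ :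
                ∀ n : ℕ, LinearMap.range (((1 - T * adjoint T) * Q : H →L[ℂ] H) : H →ₗ[ℂ] H)) (n + 1) =
              (U x : ∀ n : ℕ, LinearMap.range (((1 - T * adjoint T) * Q : H →L[ℂ] H) : H →ₗ[ℂ] H)) n := by
  have hT' : IsPowerPartialIsometry T := hT
  have hP : IsStarProjection P := ⟨isIdempotentElem_of_forall_mem hPfix hPrange, hPsa⟩
  have hQ : IsStarProjection Q := ⟨isIdempotentElem_of_forall_mem hQfix hQrange, hQsa⟩
  have hPr : LinearMap.range (P : H →ₗ[ℂ] H) = iInfRangePow T :=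
    range_eq_of_forall_mem hPfix hPrange
  have hQr : LinearMap.range (Q : H →ₗ[ℂ] H) = iInfRangePow (adjoint T) :=
    range_eq_of_forall_mem hQfix hQrange
  have hQT : Commute Q T := hT'.commute_of_range_eq_iInfRangePow_adjoint hQ hQr
  have hPQ : Commute P Q := by
    have hPQr := hPr ▸ iInfRangePow_mem_invtSubmodule_of_commute hQT
    exact hP.commute_of_mem_invtSubmodule hPQr (by rwa [hQsa.adjoint_eq])
  have hE : IsIdempotentElem (T * adjoint T) := hT'.isIdempotentElem_mul_star
  have hEQ : Commute (T * adjoint T) Q := (hQT.mul_right (hQsa.star_eq ▸ hQT.star_star)).symm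
  have := (hP.isIdempotentElem.one_sub.mul_of_commute ((Commute.one_left Q).sub_left hPQ)
    hQ.isIdempotentElem).isClosed_range.completeSpace_coe
  have := (hE.one_sub.mul_of_commute ((Commute.one_left Q).sub_left hEQ)
    hQ.isIdempotentElem).isClosed_range.completeSpace_coe
  exact hT'.exists_linearIsometryEquiv_lp
    (by rw [range_one_sub_mul_eq_ker_inf_range hP.isIdempotentElem hQ.isIdempotentElem hPQ,
      ← hPsa.isSymmetric.orthogonal_range, hPr, hQr])
    (by rw [range_one_sub_mul_eq_ker_inf_range hE hQ.isIdempotentElem hEQ, mul_def,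
      ker_self_comp_adjoint, hQr])
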